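/- arXiv:0801.1441 — 2 statements merged into one kernel-verified Lean document; each statement's English description precedes it below -/
import Mathlib

section
/- The limit c₂ := lim_{k→∞} ( Σ_{n=1}^{k} arctan(1/√n) − 2√k ) exists, i.e. the sequence k ↦ Σ_{n=1}^{k} arctan(1/√n) − 2√k converges to a real number (the 'square root spiral constant' of the spiral of Theodorus). -/
open Filter Finset Real

/-!
Write `a k = ∑_{n ≤ k} arctan (1/√n) - 2√k`. Its increment
`arctan (1/√(k+1)) - 2 (√(k+1) - √k)` compares two quantities that both equal `x + O(x³)` with
`x = 1/√(k+1)`: `arctan x = x + O(x³)`, and `2 (√(k+1) - √k) = 2 / (√(k+1) + √k) = x + O(x³)`.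
So the increments are `O(k^{-3/2})`, hence summable, and `a` is a Cauchy sequence.
-/

namespace Real

lemma arctan_le_self {x : ℝ} (hx : 0 ≤ x) : arctan x ≤ x := by
  simpa only [tan_arctan] using le_tan (arctan_nonneg.2 hx) (arctan_lt_pi_div_two x)

lemma sub_pow_three_div_three_le_arctan {x : ℝ} (hx : 0 ≤ x) : x - x ^ 3 / 3 ≤ arctan x := by
  let g : ℝ → ℝ := fun y => arctan y - (y - y ^ 3 / 3)
  have hg : ∀ y, HasDerivAt g (y ^ 4 / (1 + y ^ 2)) y := fun y =>
    ((hasDerivAt_arctan y).fun_sub ((hasDerivAt_id' y).fun_sub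
      ((hasDerivAt_pow 3 y).div_const 3))).congr_deriv (by field_simp; ring)
  have hmono : Monotone g := monotone_of_deriv_nonneg (fun y => (hg y).differentiableAt)
    fun y => (hg y).deriv ▸ by positivity
  have := hmono hx
  simp only [g, arctan_zero] at this
  linarith

lemma sqrt_add_one_sub_sqrt {y : ℝ} (hy : 0 ≤ y) : √(y + 1) - √y = 1 / (√(y + 1) + √y) := by
  have hpos : 0 < √(y + 1) + √y := by positivity
  rw [eq_div_iff hpos.ne', mul_comm, ← sq_sub_sq, sq_sqrt (by linarith), sq_sqrt hy]
  ring

lemma one_div_sqrt_add_one_le_two_mul_sqrt_add_one_sub_sqrt {y : ℝ} (hy : 0 ≤ y) :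
    1 / √(y + 1) ≤ 2 * (√(y + 1) - √y) := by
  have hle : √y ≤ √(y + 1) := sqrt_le_sqrt (by linarith)
  rw [sqrt_add_one_sub_sqrt hy, ← mul_div_assoc, mul_one,
    div_le_div_iff₀ (by positivity) (by positivity)]
  linarith

lemma two_mul_sqrt_add_one_sub_sqrt_le {y : ℝ} (hy : 0 ≤ y) :
    2 * (√(y + 1) - √y) ≤ 1 / √(y + 1) + (1 / √(y + 1)) ^ 3 := by
  have hs : 1 ≤ √(y + 1) := one_le_sqrt.2 (by linarith)
  have hst := sqrt_add_one_sub_sqrt hy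
  rw [eq_div_iff (by positivity)] at hst
  set s := √(y + 1)
  set t := √y
  have ht : 0 ≤ t := sqrt_nonneg y
  -- `2 / (s + t) - 1 / s = 1 / (s (s + t)²) ≤ 1 / s³`
  have key : 2 * s ^ 3 ≤ (s ^ 2 + 1) * (s + t) := by nlinarith
  have key' : 2 * s ^ 3 * (s - t) ≤ s ^ 2 + 1 := by
    nlinarith [mul_le_mul_of_nonneg_right key (by nlinarith : 0 ≤ s - t)]
  rw [div_pow, one_pow, div_add_div _ _ (by positivity) (by positivity),
    le_div_iff₀ (by positivity)]
  nlinarith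

end Real

lemma abs_arctan_one_div_sqrt_add_one_sub_le {y : ℝ} (hy : 0 ≤ y) :
    |arctan (1 / √(y + 1)) - 2 * (√(y + 1) - √y)| ≤ 2 * (1 / √(y + 1)) ^ 3 := by
  have hx : 0 ≤ 1 / √(y + 1) := by positivity
  have := arctan_le_self hx
  have := sub_pow_three_div_three_le_arctan hx
  have := one_div_sqrt_add_one_le_two_mul_sqrt_add_one_sub_sqrt hy
  have := two_mul_sqrt_add_one_sub_sqrt_le hy
  rw [abs_le]
  constructor <;> nlinarith [pow_nonneg hx 3]

lemma summable_one_div_sqrt_nat_add_one_pow_three :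
    Summable fun n : ℕ => (1 / √((n : ℝ) + 1)) ^ 3 := by
  have h : Summable fun n : ℕ => ((n : ℝ) ^ (3 / 2 : ℝ))⁻¹ :=
    summable_nat_rpow_inv.2 (by norm_num)
  refine ((summable_nat_add_iff 1).2 h).congr fun n => ?_
  rw [one_div, inv_pow, sqrt_eq_rpow, ← rpow_natCast, ← rpow_mul (by positivity)]
  norm_num

noncomputable def sqrtSpiralDefect (k : ℕ) : ℝ :=
  (∑ n ∈ Icc 1 k, arctan (1 / √n)) - 2 * √k

lemma sqrtSpiralDefect_succ_sub (k : ℕ) :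
    sqrtSpiralDefect (k + 1) - sqrtSpiralDefect k
      = arctan (1 / √((k : ℝ) + 1)) - 2 * (√((k : ℝ) + 1) - √k) := by
  simp only [sqrtSpiralDefect, sum_Icc_succ_top (Nat.le_add_left 1 k), Nat.cast_succ]
  ring

lemma dist_sqrtSpiralDefect_succ_le (k : ℕ) :
    dist (sqrtSpiralDefect k) (sqrtSpiralDefect (k + 1)) ≤ 2 * (1 / √((k : ℝ) + 1)) ^ 3 := by
  rw [dist_comm, Real.dist_eq, sqrtSpiralDefect_succ_sub]
  exact abs_arctan_one_div_sqrt_add_one_sub_le k.cast_nonneg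

/-- The 'square root spiral constant' exists: the sequence
`k ↦ ∑_{n=1}^{k} arctan(1/√n) − 2√k` converges to a real number. -/
theorem sqrt_spiral_constant_exists :
    ∃ c₂ : ℝ,
      Tendsto
        (fun k : ℕ =>
          (∑ n ∈ Finset.Icc 1 k, Real.arctan (1 / Real.sqrt n)) - 2 * Real.sqrt k)
        atTop (nhds c₂) :=
  cauchySeq_tendsto_of_complete <| cauchySeq_of_dist_le_of_summable _
    dist_sqrtSpiralDefect_succ_le (summable_one_div_sqrt_nat_add_one_pow_three.mul_left 2)
end

section
/- The angle on the square root spiral between the rays of two successive square numbers tends to 2 radians (i.e. 360°/π measured in degrees): lim_{m→∞} Σ_{n=m²+1}^{(m+1)²} arctan(1/√n) = 2. -/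
/-!
The `n`-th triangle of the spiral has legs `√n`, `1` and hypotenuse `√(n + 1)`, so its angle
`φₙ = arctan (1 / √n)` satisfies `1 / √(n + 1) = sin φₙ ≤ φₙ ≤ tan φₙ = 1 / √n`.
Between `m²` and `(m + 1)²` there are `2m + 1` triangles, each with
`m < √n < √(n + 1) ≤ m + 2`, so the angle between the two rays lies between `(2m + 1) / (m + 2)`
and `(2m + 1) / m`, and both bounds tend to `2`.
-/

open Filter Finset Real

namespace Real

lemma div_sqrt_one_add_sq_le_arctan {x : ℝ} (hx : 0 ≤ x) : x / √(1 + x ^ 2) ≤ arctan x := by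
  simpa only [sin_arctan] using sin_le (arctan_nonneg.mpr hx)

lemma one_div_sqrt_add_one_le_arctan_one_div_sqrt {x : ℝ} (hx : 0 < x) :
    1 / √(x + 1) ≤ arctan (1 / √x) := by
  have hsx : 0 < √x := sqrt_pos.mpr hx
  have hsin : 1 / √x / √(1 + (1 / √x) ^ 2) = 1 / √(x + 1) := by
    rw [div_pow, sq_sqrt hx.le, one_pow, one_add_div hx.ne', sqrt_div' _ hx.le, add_comm,
      div_div_div_cancel_right₀ hsx.ne']
  exact hsin ▸ div_sqrt_one_add_sq_le_arctan (one_div_nonneg.mpr hsx.le)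

end Real

lemma card_Icc_sq_add_one_succ_sq (m : ℕ) : #(Icc (m ^ 2 + 1) ((m + 1) ^ 2)) = 2 * m + 1 := by
  rw [Nat.card_Icc]
  ring_nf
  omega

lemma one_div_add_two_le_arctan_one_div_sqrt {m n : ℕ} (hn_pos : 0 < n)
    (hn : n ≤ (m + 1) ^ 2) : 1 / (m + 2 : ℝ) ≤ arctan (1 / √n) := by
  have hlt : n < (m + 2) ^ 2 := hn.trans_lt (by gcongr; omega)
  have hle : (n + 1 : ℝ) ≤ (m + 2) ^ 2 := by exact_mod_cast hlt
  calc 1 / (m + 2 : ℝ) ≤ 1 / √(n + 1) :=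
        one_div_le_one_div_of_le (by positivity) ((sqrt_le_left (by positivity)).mpr hle)
    _ ≤ arctan (1 / √n) := one_div_sqrt_add_one_le_arctan_one_div_sqrt (by positivity)

lemma arctan_one_div_sqrt_le_one_div {m n : ℕ} (hm : 0 < m) (hn : m ^ 2 ≤ n) :
    arctan (1 / √n) ≤ 1 / m := by
  have hm' : (0 : ℝ) < m := by exact_mod_cast hm
  have hsqrt : (m : ℝ) ≤ √n := (le_sqrt' hm').mpr (by exact_mod_cast hn)
  calc arctan (1 / √n) ≤ 1 / √n := arctan_le_self (by positivity)
    _ ≤ 1 / m := one_div_le_one_div_of_le hm' hsqrt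

lemma div_le_sum_arctan_Icc_sq (m : ℕ) :
    (2 * m + 1 : ℝ) / (m + 2) ≤
      ∑ n ∈ (Icc (m ^ 2 + 1) ((m + 1) ^ 2) : Finset ℕ), arctan (1 / √n) :=
  calc (2 * m + 1 : ℝ) / (m + 2) = #(Icc (m ^ 2 + 1) ((m + 1) ^ 2)) • (1 / (m + 2 : ℝ)) := by
        rw [card_Icc_sq_add_one_succ_sq, nsmul_eq_mul]; push_cast; ring
    _ ≤ _ := card_nsmul_le_sum _ _ _ fun n hn => by
        rw [mem_Icc] at hn
        exact one_div_add_two_le_arctan_one_div_sqrt (by omega) hn.2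

lemma sum_arctan_Icc_sq_le_div {m : ℕ} (hm : 0 < m) :
    ∑ n ∈ (Icc (m ^ 2 + 1) ((m + 1) ^ 2) : Finset ℕ), arctan (1 / √n) ≤
      (2 * m + 1 : ℝ) / m :=
  calc _ ≤ #(Icc (m ^ 2 + 1) ((m + 1) ^ 2)) • (1 / (m : ℝ)) :=
        sum_le_card_nsmul _ _ _ fun n hn => by
          rw [mem_Icc] at hn
          exact arctan_one_div_sqrt_le_one_div hm (by omega)
    _ = (2 * m + 1 : ℝ) / m := by
        rw [card_Icc_sq_add_one_succ_sq, nsmul_eq_mul]; push_cast; ring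

/-- The angle on the square root spiral between the rays of two successive
square numbers tends to `2` radians (`360°/π` in degrees). -/
theorem angle_between_successive_squares_tendsto_two :
    Tendsto
      (fun m : ℕ =>
        ∑ n ∈ (Finset.Icc (m ^ 2 + 1) ((m + 1) ^ 2) : Finset ℕ),
          Real.arctan (1 / Real.sqrt n))
      atTop (nhds 2) := by
  have hlower : Tendsto (fun m : ℕ => (2 * m + 1 : ℝ) / (m + 2)) atTop (nhds 2) := by
    simpa [add_comm] using tendsto_add_mul_div_add_mul_atTop_nhds (1 : ℝ) 2 2 one_ne_zero
  have hupper : Tendsto (fun m : ℕ => (2 * m + 1 : ℝ) / m) atTop (nhds 2) := by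
    simpa [add_comm] using tendsto_add_mul_div_add_mul_atTop_nhds (1 : ℝ) 0 2 one_ne_zero
  exact tendsto_of_tendsto_of_tendsto_of_le_of_le' hlower hupper
    (.of_forall div_le_sum_arctan_Icc_sq)
    ((eventually_gt_atTop 0).mono fun _ => sum_arctan_Icc_sq_le_div)
end
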